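/- Let {A_i}_{i∈I} be a family of groups. Then for every j ∈ ℕ, Tor_j(*_{i∈I} A_i) equals the normal closure in the free product of ⋃_{i∈I} Tor_j(A_i), and the natural map *_{i∈I}(A_i/Tor_j(A_i)) → (*_{i∈I} A_i)/Tor_j(*_{i∈I} A_i) is an isomorphism. -/

import Mathlib

/-- Auxiliary: the iterated torsion subgroups bundled with proofs of normality. -/
def torIterAux (G : Type*) [Group G] : ℕ → {N : Subgroup G // N.Normal}
  | 0 => ⟨⊥, inferInstance⟩
  | (i + 1) =>
    let p := torIterAux G i
    haveI := p.2
    ⟨(Subgroup.normalClosure {x : G ⧸ p.1 | IsOfFinOrder x}).comap (QuotientGroup.mk' p.1),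
      Subgroup.Normal.comap Subgroup.normalClosure_normal _⟩

/-- `torIter G i` is `Tor_i(G)`: `Tor_0(G) = {e}` and `Tor_{i+1}(G)` is the preimage in `G`
of the normal closure of the set of torsion elements of `G / Tor_i(G)`. -/
def torIter (G : Type*) [Group G] (i : ℕ) : Subgroup G := (torIterAux G i).1

instance torIter_normal (G : Type*) [Group G] (i : ℕ) : (torIter G i).Normal :=
  (torIterAux G i).2

theorem torIter_succ (G : Type*) [Group G] (i : ℕ) :
    torIter G (i + 1) =
      (Subgroup.normalClosure {x : G ⧸ torIter G i | IsOfFinOrder x}).comap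
        (QuotientGroup.mk' (torIter G i)) := rfl

theorem torIter_mono (G : Type*) [Group G] : Monotone (torIter G) := by
  apply monotone_nat_of_le_succ
  intro i
  rw [torIter_succ]
  calc torIter G i = (QuotientGroup.mk' (torIter G i)).ker := (QuotientGroup.ker_mk' _).symm
    _ ≤ _ := Subgroup.ker_le_comap _ _

/-- `Tor_∞(G)`, the union of all the `Tor_i(G)`. -/
def torInf (G : Type*) [Group G] : Subgroup G := ⨆ i, torIter G i

instance torInf_normal (G : Type*) [Group G] : (torInf G).Normal := by
  constructor
  intro n hn g
  rw [torInf, Subgroup.mem_iSup_of_directed ((torIter_mono G).directed_le)] at hn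
  obtain ⟨i, hi⟩ := hn
  exact le_iSup (torIter G) i ((torIter_normal G i).conj_mem n hi g)

/-- The torsion length of `G`: the smallest `n` with `Tor_n(G) = Tor_∞(G)`, or `∞`. -/
noncomputable def torLen (G : Type*) [Group G] : ℕ∞ :=
  sInf ((↑) '' {n : ℕ | torIter G n = torInf G})

open Monoid

/-!
A torsion element of a free product is conjugate into a factor: conjugating a reduced word whose
first and last letters lie in the same factor shortens it, and a reduced word whose first and last
letters lie in different factors has infinite order, since its powers are reduced. So the torsion
of `*ᵢ Aᵢ` and that of the factors have the same normal closure. Inductively, once `Tor_j(*ᵢ Aᵢ)` is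
the normal closure of the `Tor_j(Aᵢ)`, it is the kernel of `*ᵢ Aᵢ → *ᵢ (Aᵢ / Tor_j(Aᵢ))`; hence
`Tor_{j+1}(*ᵢ Aᵢ)` is the preimage of the normal closure of the torsion of the factors
`Aᵢ / Tor_j(Aᵢ)`, which is the normal closure of the `Tor_{j+1}(Aᵢ)`.
-/

namespace Subgroup

theorem normalClosure_iUnion_image_normalClosure {ι H : Type*} {G : ι → Type*}
    [∀ i, Group (G i)] [Group H] (f : ∀ i, G i →* H) (S : ∀ i, Set (G i)) :
    normalClosure (⋃ i, f i '' (normalClosure (S i) : Set (G i))) =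
      normalClosure (⋃ i, f i '' S i) := by
  refine le_antisymm (normalClosure_le_normal (Set.iUnion_subset fun i => ?_))
    (normalClosure_mono (Set.iUnion_mono fun i => Set.image_mono subset_normalClosure))
  rintro _ ⟨a, ha, rfl⟩
  exact normalClosure_mono (Set.subset_iUnion (fun i => f i '' S i) i)
    (map_normalClosure_le _ _ (mem_map_of_mem _ ha))

end Subgroup

namespace Monoid.CoprodI

open Subgroup

variable {ι : Type*}

section Words

variable {M : ι → Type*} [∀ i, Monoid (M i)]

theorem NeWord.prod_ne_one {i j : ι} (w : NeWord M i j) : w.prod ≠ 1 := by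
  classical
  intro h
  have : w.toWord = Word.empty := Word.equiv.symm.injective (h.trans Word.prod_empty.symm)
  exact w.toList_ne_nil (congrArg Word.toList this)

def NeWord.pow {i j : ι} (w : NeWord M i j) (hij : i ≠ j) : ℕ → NeWord M i j
  | 0 => w
  | n + 1 => .append w hij.symm (w.pow hij n)

theorem NeWord.prod_pow {i j : ι} (w : NeWord M i j) (hij : i ≠ j) (n : ℕ) :
    (w.pow hij n).prod = w.prod ^ (n + 1) := by
  induction n with
  | zero => simp [pow]
  | succ n ih => rw [pow, append_prod, ih, pow_succ' _ (n + 1)]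

theorem NeWord.not_isOfFinOrder_prod {i j : ι} (w : NeWord M i j) (hij : i ≠ j) :
    ¬ IsOfFinOrder w.prod := by
  rw [isOfFinOrder_iff_pow_eq_one]
  rintro ⟨n, hn, h⟩
  obtain ⟨n, rfl⟩ := Nat.exists_eq_add_one.mpr hn
  exact (w.pow hij n).prod_ne_one ((w.prod_pow hij n).trans h)

section WordLength

variable [DecidableEq ι] [∀ i, DecidableEq (M i)]

def wordLength (x : CoprodI M) : ℕ := (Word.equiv x).toList.length

theorem wordLength_prod (w : Word M) : wordLength w.prod = w.toList.length :=
  congrArg (fun w => w.toList.length) (Word.equiv.apply_symm_apply w)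

theorem Word.length_of_smul_le {i : ι} (m : M i) (w : Word M) :
    (of m • w).toList.length ≤ w.toList.length + 1 := by
  have hw : rcons (equivPair i w) = w := (equivPair i).symm_apply_apply w
  rw [Word.of_smul_def]
  generalize equivPair i w = p at hw ⊢
  subst hw
  unfold rcons; split <;> split <;> (simp; try omega)

theorem wordLength_of_mul_le {i : ι} (m : M i) (x : CoprodI M) :
    wordLength (of m * x) ≤ wordLength x + 1 := by
  change ((of m * x) • Word.empty).toList.length ≤ (x • Word.empty).toList.length + 1
  rw [mul_smul]
  exact Word.length_of_smul_le m _

theorem wordLength_prod_le (L : List (Σ i, M i)) :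
    wordLength (L.map fun l => of l.2).prod ≤ L.length := by
  induction L with
  | nil => exact (wordLength_prod Word.empty).le
  | cons l L ih =>
    rw [List.map_cons, List.prod_cons, List.length_cons]
    exact (wordLength_of_mul_le _ _).trans (Nat.add_le_add_right ih 1)

end WordLength

end Words

section Map

variable {M N : ι → Type*} [∀ i, Monoid (M i)] [∀ i, Monoid (N i)] (f : ∀ i, M i →* N i)

def map : CoprodI M →* CoprodI N := lift fun i => of.comp (f i)

@[simp]
theorem map_of {i : ι} (m : M i) : map f (of m) = of (f i m) := lift_of _ _

theorem map_surjective (hf : ∀ i, Function.Surjective (f i)) : Function.Surjective (map f) := by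
  intro y
  induction y using CoprodI.induction_on with
  | one => exact ⟨1, map_one _⟩
  | of i n =>
    obtain ⟨m, rfl⟩ := hf _ n
    exact ⟨of m, map_of f m⟩
  | mul y z hy hz =>
    obtain ⟨⟨a, rfl⟩, ⟨b, rfl⟩⟩ := And.intro hy hz
    exact ⟨a * b, map_mul _ a b⟩

end Map

section Group

variable {G H : ι → Type*} [∀ i, Group (G i)] [∀ i, Group (H i)]

theorem inv_of_mul_prod_mul_of {i : ι} (a b : G i) (L : List (Σ i, G i)) :
    (of a)⁻¹ * (((⟨i, a⟩ : Σ i, G i) :: (L ++ [⟨i, b⟩])).map fun l => of l.2).prod * of a =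
      ((L ++ [(⟨i, b * a⟩ : Σ i, G i)]).map fun l => of l.2).prod := by
  simp [mul_assoc]

theorem NeWord.prod_eq_of_head_or_exists_isConj_wordLength_lt [DecidableEq ι]
    [∀ i, DecidableEq (G i)] {i : ι} (w : NeWord G i i) :
    w.prod = of w.head ∨ ∃ y, IsConj y w.prod ∧ wordLength y < w.toList.length := by
  obtain ⟨L, hL⟩ : ∃ L, w.toList = ⟨i, w.head⟩ :: L :=
    List.head?_eq_some_iff.mp w.toList_head?
  rcases L.eq_nil_or_concat' with rfl | ⟨L, b, rfl⟩
  · left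
    rw [NeWord.prod]
    simp [Word.prod, NeWord.toWord, hL]
  obtain rfl : b = ⟨i, w.last⟩ := by
    have := w.toList_getLast?
    rwa [hL, ← List.cons_append, List.getLast?_concat, Option.some_inj] at this
  -- Conjugating by the first letter merges it into the last one.
  refine .inr ⟨(of w.head)⁻¹ * w.prod * of w.head,
    isConj_iff.mpr ⟨of w.head, by group⟩, ?_⟩
  rw [NeWord.prod, Word.prod, NeWord.toWord]
  dsimp only
  rw [hL, inv_of_mul_prod_mul_of]
  refine (wordLength_prod_le _).trans_lt ?_
  simp

theorem eq_one_or_isConj_of_of_isOfFinOrder {x : CoprodI G} (hx : IsOfFinOrder x) :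
    x = 1 ∨ ∃ (i : ι) (a : G i), IsOfFinOrder a ∧ IsConj (of a) x := by
  classical
  induction hn : wordLength x using Nat.strong_induction_on generalizing x with
  | _ n ih =>
  rcases eq_or_ne x 1 with rfl | hx1
  · exact .inl rfl
  right
  obtain ⟨i, j, w, hw⟩ := NeWord.of_word (Word.equiv x) fun h => hx1 <| by
    rw [← Word.equiv.symm_apply_apply x, h]; rfl
  obtain rfl : w.prod = x := by rw [NeWord.prod, hw]; exact Word.equiv.symm_apply_apply x
  rcases ne_or_eq i j with hij | rfl
  · exact absurd hx (w.not_isOfFinOrder_prod hij)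
  rcases w.prod_eq_of_head_or_exists_isConj_wordLength_lt with hw | ⟨y, hyx, hylen⟩
  · rw [hw] at hx ⊢
    exact ⟨i, w.head, (of_injective i).isOfFinOrder_iff.mp hx, .refl _⟩
  have hlen : w.toList.length = n := by rw [← hn, NeWord.prod, wordLength_prod]; rfl
  rcases ih _ (hlen ▸ hylen) (hyx.symm.isOfFinOrder hx) rfl with hy1 | ⟨k, a, ha, hay⟩
  · rw [hy1, isConj_one_right] at hyx
    exact absurd hyx hx1
  · exact ⟨k, a, ha, hay.trans hyx⟩

theorem normalClosure_setOf_isOfFinOrder :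
    normalClosure {x : CoprodI G | IsOfFinOrder x} =
      normalClosure (⋃ i, of '' {a : G i | IsOfFinOrder a}) := by
  refine le_antisymm (normalClosure_le_normal fun x hx => ?_)
    (normalClosure_mono (Set.iUnion_subset fun i => ?_))
  · rcases eq_one_or_isConj_of_of_isOfFinOrder hx with rfl | ⟨i, a, ha, hax⟩
    · exact one_mem _
    · obtain ⟨g, rfl⟩ := isConj_iff.mp hax
      exact normalClosure_normal.conj_mem _
        (subset_normalClosure (Set.mem_iUnion_of_mem i ⟨a, ha, rfl⟩ :
          of a ∈ ⋃ i, of '' {a : G i | IsOfFinOrder a})) g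
  · rintro _ ⟨a, ha, rfl⟩
    exact of.isOfFinOrder ha

theorem ker_map {f : ∀ i, G i →* H i} (hf : ∀ i, Function.Surjective (f i)) :
    (map f).ker = normalClosure (⋃ i, of '' ((f i).ker : Set (G i))) := by
  set K := normalClosure (⋃ i, of '' ((f i).ker : Set (G i)))
  refine le_antisymm (fun x hx => ?_) (normalClosure_le_normal (Set.iUnion_subset fun i => ?_))
  · let ψ : CoprodI H →* CoprodI G ⧸ K := lift fun i =>
      (f i).liftOfSurjective (hf i) ⟨(QuotientGroup.mk' K).comp of, fun a ha => by
        simpa using subset_normalClosure (Set.mem_iUnion_of_mem i (Set.mem_image_of_mem of ha))⟩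
    have hψ : ψ.comp (map f) = QuotientGroup.mk' K := ext_hom _ _ fun i => by ext; simp [ψ]
    rw [← QuotientGroup.ker_mk' K, MonoidHom.mem_ker, ← hψ, MonoidHom.comp_apply,
      MonoidHom.mem_ker.mp hx, map_one]
  · rintro _ ⟨a, ha, rfl⟩
    simp_all

theorem comap_map_normalClosure {f : ∀ i, G i →* H i} (hf : ∀ i, Function.Surjective (f i))
    (T : ∀ i, Subgroup (H i)) :
    (normalClosure (⋃ i, of '' (T i : Set (H i)))).comap (map f) =
      normalClosure (⋃ i, of '' ((T i).comap (f i) : Set (G i))) := by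
  have hker : (map f).ker ≤ normalClosure (⋃ i, of '' ((T i).comap (f i) : Set (G i))) := by
    rw [ker_map hf]
    exact normalClosure_mono (Set.iUnion_mono fun i => Set.image_mono
      fun a ha => show f i a ∈ T i by rw [MonoidHom.mem_ker.mp ha]; exact one_mem _)
  rw [← comap_map_eq_self hker, map_normalClosure _ _ (map_surjective f hf), Set.image_iUnion]
  congr 3 with i
  rw [← Set.image_comp, show map f ∘ of = of ∘ f i from funext (map_of f), Set.image_comp,
    coe_comap, Set.image_preimage_eq _ (hf i)]

noncomputable def quotientEquiv (N : ∀ i, Subgroup (G i)) [∀ i, (N i).Normal] :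
    CoprodI (fun i => G i ⧸ N i) ≃* CoprodI G ⧸ normalClosure (⋃ i, of '' (N i : Set (G i))) :=
  have hker : (map fun i => QuotientGroup.mk' (N i)).ker =
      normalClosure (⋃ i, of '' (N i : Set (G i))) := by
    simp [ker_map fun i => QuotientGroup.mk'_surjective (N i)]
  ((QuotientGroup.quotientMulEquivOfEq hker).symm.trans
    (QuotientGroup.quotientKerEquivOfSurjective _
      (map_surjective _ fun i => QuotientGroup.mk'_surjective (N i)))).symm

@[simp]
theorem quotientEquiv_of (N : ∀ i, Subgroup (G i)) [∀ i, (N i).Normal] {i : ι} (a : G i) :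
    quotientEquiv N (of (QuotientGroup.mk a)) = QuotientGroup.mk (of a) := by
  rw [quotientEquiv, MulEquiv.symm_apply_eq]
  rfl

end Group

end Monoid.CoprodI

open Subgroup

theorem torIter_succ_eq_comap {G H : Type*} [Group G] [Group H] {f : G →* H}
    (hf : Function.Surjective f) {j : ℕ} (hker : f.ker = torIter G j) :
    torIter G (j + 1) = (normalClosure {h : H | IsOfFinOrder h}).comap f := by
  let e : G ⧸ torIter G j ≃* H :=
    (QuotientGroup.quotientMulEquivOfEq hker.symm).trans
      (QuotientGroup.quotientKerEquivOfSurjective f hf)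
  have hfe : f = (e : G ⧸ torIter G j →* H).comp (QuotientGroup.mk' _) := by ext; rfl
  have htors : e ⁻¹' {h : H | IsOfFinOrder h} = {x | IsOfFinOrder x} :=
    Set.ext fun x => e.injective.isOfFinOrder_iff (f := (e : G ⧸ torIter G j →* H))
  rw [torIter_succ, hfe, ← comap_comap, ← comap_normalClosure, htors]

theorem torIter_coprodI_eq_normalClosure {ι : Type*} (A : ι → Type*) [∀ i, Group (A i)]
    (j : ℕ) :
    torIter (CoprodI A) j = normalClosure (⋃ i, CoprodI.of '' (torIter (A i) j : Set (A i))) := by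
  induction j with
  | zero =>
    refine (normalClosure_eq_bot_iff.mpr (Set.iUnion_subset fun i => ?_)).symm
    rintro _ ⟨a, ha, rfl⟩
    simp_all [torIter, torIterAux]
  | succ j ih =>
    have hmk : ∀ i, Function.Surjective (QuotientGroup.mk' (torIter (A i) j)) :=
      fun i => QuotientGroup.mk'_surjective _
    have hker : (CoprodI.map fun i => QuotientGroup.mk' (torIter (A i) j)).ker =
        torIter (CoprodI A) j := by
      simp [CoprodI.ker_map hmk, ih]
    rw [torIter_succ_eq_comap (CoprodI.map_surjective _ hmk) hker,
      CoprodI.normalClosure_setOf_isOfFinOrder,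
      ← normalClosure_iUnion_image_normalClosure, CoprodI.comap_map_normalClosure hmk]
    simp only [torIter_succ]

/-- For a family of groups `{A_i}` and every `j`, `Tor_j` of the free product `*_i A_i`
equals the normal closure of `⋃_i Tor_j(A_i)` (the images of the `Tor_j(A_i)` in the free
product), and the natural map `*_i (A_i/Tor_j(A_i)) → (*_i A_i)/Tor_j(*_i A_i)` is an
isomorphism. -/
theorem torIter_coprodI
    {ι : Type*} (A : ι → Type*) [∀ i, Group (A i)] (j : ℕ) :
    torIter (CoprodI A) j =
      Subgroup.normalClosure (⋃ i : ι, CoprodI.of '' ((torIter (A i) j : Set (A i)))) ∧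
    ∃ e : CoprodI (fun i => A i ⧸ torIter (A i) j) ≃*
        CoprodI A ⧸ torIter (CoprodI A) j,
      ∀ (i : ι) (a : A i),
        e (CoprodI.of (QuotientGroup.mk a)) = QuotientGroup.mk (CoprodI.of a) := by
  have h := torIter_coprodI_eq_normalClosure A j
  refine ⟨h, (CoprodI.quotientEquiv fun i => torIter (A i) j).trans
    (QuotientGroup.quotientMulEquivOfEq h.symm), fun i a => ?_⟩
  simp
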